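/- Let a, b be real numbers with 3 ≤ a < b, and suppose there exists z_0 ∈ (1, a] such that φ_{a,b}(z_0) ≤ 0. Then the partial theta function g_{√a} satisfies g_{√a}(−√a · z_0) ≤ 0; in particular there exists a point y_0 with √a < |y_0| ≤ (√a)³, namely y_0 = −√a·z_0 ∈ [−a^{3/2}, −a^{1/2}), at which g_{√a}(y_0) ≤ 0. -/

import Mathlib

open scoped Classical

/-- Taylor coefficients of `f_{a,b}`: `a₀ = a₁ = 1`,
`aₖ = aₖ₋₁² / (aₖ₋₂ · qₖ)` where `qₖ = a` for even `k` and `qₖ = b` for odd `k`. -/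
noncomputable def coeffAB (a b : ℝ) : ℕ → ℝ
  | 0 => 1
  | 1 => 1
  | n + 2 => (coeffAB a b (n + 1)) ^ 2 / (coeffAB a b n * (if Even n then a else b))

/-- The entire function `f_{a,b}(z) = Σ aₖ zᵏ` (as a function on `ℂ`). -/
noncomputable def fAB (a b : ℝ) (z : ℂ) : ℂ := ∑' k : ℕ, (coeffAB a b k : ℂ) * z ^ k

/-- The restriction of `f_{a,b}` to the reals. -/
noncomputable def fABReal (a b x : ℝ) : ℝ := ∑' k : ℕ, coeffAB a b k * x ^ k

/-- `φ_{a,b}(x) = f_{a,b}(-x) = Σ (-1)ᵏ aₖ xᵏ` (real variable). -/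
noncomputable def phiAB (a b x : ℝ) : ℝ := ∑' k : ℕ, (-1 : ℝ) ^ k * coeffAB a b k * x ^ k

/-- `φ_{a,b}` as a function of a complex variable. -/
noncomputable def phiABC (a b : ℝ) (z : ℂ) : ℂ :=
  ∑' k : ℕ, (-1 : ℂ) ^ k * (coeffAB a b k : ℂ) * z ^ k

/-- Membership in the Laguerre–Pólya class of type I:
`f(z) = c zⁿ e^{βz} ∏ (1 + z/xₖ)` with `c ∈ ℝ`, `β ≥ 0`, `xₖ > 0`, `Σ 1/xₖ < ∞`
(the product over a countable — possibly finite or empty — index set). -/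
def LaguerrePolyaI (f : ℂ → ℂ) : Prop :=
  ∃ (c : ℝ) (n : ℕ) (β : ℝ) (ι : Type) (_ : Countable ι) (x : ι → ℝ),
    0 ≤ β ∧ (∀ i, 0 < x i) ∧ Summable (fun i => (x i)⁻¹) ∧
    ∀ z : ℂ, f z = (c : ℂ) * z ^ n * Complex.exp (β * z) * ∏' i, (1 + z / (x i : ℂ))

/-- The partial theta function `g_t(z) = Σ zᵏ t^{-k²}` (complex variable). -/
noncomputable def partialTheta (t : ℝ) (z : ℂ) : ℂ := ∑' k : ℕ, z ^ k / (t : ℂ) ^ (k ^ 2)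

/-- The partial theta function restricted to the reals. -/
noncomputable def partialThetaReal (t x : ℝ) : ℝ := ∑' k : ℕ, x ^ k / t ^ (k ^ 2)

/-- A function `f : ℂ → ℂ` has only real zeros. -/
def OnlyRealZeros (f : ℂ → ℂ) : Prop := ∀ z : ℂ, f z = 0 → ∃ r : ℝ, z = (r : ℂ)

/-- The constant `q_∞ ≈ 3.2336…`: the infimum of the set
`{t² : t > 1 and g_t has only real zeros}`. -/
noncomputable def qInfty : ℝ :=
  sInf {s : ℝ | ∃ t : ℝ, 1 < t ∧ s = t ^ 2 ∧ OnlyRealZeros (partialTheta t)}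

/-!
Since `coeffAB a a k = a^{-k(k-1)/2}`, the substitution `y = -√a z` turns `g_{√a}` into
`φ_{a,a}`, so it suffices to show `φ_{a,a} ≤ φ_{a,b}` on `[0, a]`. With `s = a/b ≤ 1`, the
coefficients of `f_{a,b}` are those of `f_{a,a}` times `s^{m²}` at index `2m+1` and `s^{m(m+1)}`
at index `2m+2`. So `φ_{a,b} - φ_{a,a} = Σ (-1)^{k+1} d_k z^k` with
`d_k = a_k(a,a) - a_k(a,b) ≥ 0` and `d_0 = 0`, and each group of indices `2m+1, 2m+2` is
nonnegative because `a d_{2m+2} ≤ d_{2m+1}`; with `y = s^m ∈ [0,1]` this is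
`1 - y^{m+1} ≤ a^{2m} (1 - y^m)`, true as soon as `a² ≥ 2`.
-/

lemma coeffAB_pos {a b : ℝ} (ha : 0 < a) (hb : 0 < b) (k : ℕ) : 0 < coeffAB a b k := by
  induction k using Nat.twoStepInduction with
  | zero => simp [coeffAB]
  | one => simp [coeffAB]
  | more n h₀ h₁ =>
    rw [coeffAB]
    split_ifs <;> positivity

lemma coeffAB_self_succ_mul_pow {a : ℝ} (ha : 0 < a) (k : ℕ) :
    coeffAB a a (k + 1) * a ^ k = coeffAB a a k := by
  induction k with
  | zero => simp [coeffAB]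
  | succ n ih =>
    have h₀ := (coeffAB_pos ha ha n).ne'
    rw [coeffAB, ite_self, ← ih]
    field_simp
    ring

lemma coeffAB_self_mul_pow_sq {t : ℝ} (ht : t ≠ 0) (k : ℕ) :
    coeffAB (t ^ 2) (t ^ 2) k * t ^ (k ^ 2) = t ^ k := by
  induction k with
  | zero => simp [coeffAB]
  | succ n ih =>
    rw [pow_succ t n, ← ih, ← coeffAB_self_succ_mul_pow (by positivity) n]
    ring

lemma coeffAB_odd_even_eq_self_mul {a b : ℝ} (ha : 0 < a) (hb : 0 < b) (m : ℕ) :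
    coeffAB a b (2 * m + 1) = coeffAB a a (2 * m + 1) * (a / b) ^ (m * m) ∧
      coeffAB a b (2 * m + 2) = coeffAB a a (2 * m + 2) * (a / b) ^ (m * (m + 1)) := by
  have hb₀ := hb.ne'
  induction m with
  | zero => simp [coeffAB]
  | succ m ih =>
    obtain ⟨h₁, h₂⟩ := ih
    have hodd : ¬ Even (2 * m + 1) := Nat.not_even_iff_odd.2 (odd_two_mul_add_one m)
    have h₃ : coeffAB a b (2 * m + 3) =
        coeffAB a a (2 * m + 3) * (a / b) ^ ((m + 1) * (m + 1)) := by
      have := (coeffAB_pos ha ha (2 * m + 1)).ne'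
      rw [show 2 * m + 3 = 2 * m + 1 + 2 by ring, coeffAB.eq_3 a b, coeffAB.eq_3 a a, if_neg hodd,
        if_neg hodd, h₁, h₂]
      simp only [div_pow]
      field_simp
      ring
    refine ⟨h₃, ?_⟩
    have := (coeffAB_pos ha ha (2 * m + 2)).ne'
    have heven : Even (2 * m + 2) := ⟨m + 1, by ring⟩
    rw [show 2 * (m + 1) + 2 = 2 * m + 2 + 2 by ring, coeffAB.eq_3 a b, coeffAB.eq_3 a a,
      if_pos heven, if_pos heven, h₃, h₂]
    simp only [div_pow]
    field_simp
    ring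

lemma coeffAB_le_coeffAB_self {a b : ℝ} (ha : 0 < a) (hab : a ≤ b) (k : ℕ) :
    coeffAB a b k ≤ coeffAB a a k := by
  have hb := ha.trans_le hab
  have hs : a / b ≤ 1 := (div_le_one hb).2 hab
  obtain ⟨m, rfl | rfl⟩ := Nat.even_or_odd' k
  · rcases m with _ | m
    · rfl
    rw [show 2 * (m + 1) = 2 * m + 2 by ring, (coeffAB_odd_even_eq_self_mul ha hb m).2]
    exact mul_le_of_le_one_right (coeffAB_pos ha ha _).le (pow_le_one₀ (by positivity) hs)
  · rw [(coeffAB_odd_even_eq_self_mul ha hb m).1]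
    exact mul_le_of_le_one_right (coeffAB_pos ha ha _).le (pow_le_one₀ (by positivity) hs)

lemma one_sub_pow_succ_le_two_mul_one_sub_pow {y : ℝ} (h₀ : 0 ≤ y) (h₁ : y ≤ 1) {m : ℕ}
    (hm : m ≠ 0) : 1 - y ^ (m + 1) ≤ 2 * (1 - y ^ m) := by
  have hym : y ^ m ≤ y := pow_le_of_le_one h₀ h₁ hm
  have : y ^ m * (1 - y) ≤ 1 - y :=
    mul_le_of_le_one_left (sub_nonneg.2 h₁) (pow_le_one₀ h₀ h₁)
  rw [pow_succ]
  linarith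

lemma mul_sub_coeffAB_two_mul_add_two_le {a b : ℝ} (ha : √2 ≤ a) (hab : a ≤ b) (m : ℕ) :
    a * (coeffAB a a (2 * m + 2) - coeffAB a b (2 * m + 2)) ≤
      coeffAB a a (2 * m + 1) - coeffAB a b (2 * m + 1) := by
  have ha₀ : 0 < a := Real.sqrt_pos.2 two_pos |>.trans_le ha
  have hb := ha₀.trans_le hab
  rcases eq_or_ne m 0 with rfl | hm
  · simp [coeffAB]
  have hc : 0 < coeffAB a a (2 * m + 2) := coeffAB_pos ha₀ ha₀ _
  have hy₀ : 0 ≤ (a / b) ^ m := by positivity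
  have hy₁ : (a / b) ^ m ≤ 1 := pow_le_one₀ (by positivity) ((div_le_one hb).2 hab)
  obtain ⟨h₁, h₂⟩ := coeffAB_odd_even_eq_self_mul ha₀ hb m
  have h₃ : coeffAB a a (2 * m + 1) = coeffAB a a (2 * m + 2) * a ^ (2 * m + 1) :=
    (coeffAB_self_succ_mul_pow ha₀ _).symm
  rw [h₁, h₂, h₃, pow_mul, pow_mul]
  generalize coeffAB a a (2 * m + 2) = c at hc ⊢
  generalize (a / b) ^ m = y at hy₀ hy₁ ⊢
  suffices 1 - y ^ (m + 1) ≤ a ^ (2 * m) * (1 - y ^ m) by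
    linear_combination mul_le_mul_of_nonneg_left this (mul_pos ha₀ hc).le
  have ha₂ : 2 ≤ a ^ 2 := by
    simpa using pow_le_pow_left₀ (Real.sqrt_nonneg 2) ha 2
  have : 2 ≤ a ^ (2 * m) := by
    rw [pow_mul]
    exact ha₂.trans (le_self_pow₀ (by linarith) hm)
  calc 1 - y ^ (m + 1) ≤ 2 * (1 - y ^ m) :=
      one_sub_pow_succ_le_two_mul_one_sub_pow hy₀ hy₁ hm
    _ ≤ a ^ (2 * m) * (1 - y ^ m) :=
      mul_le_mul_of_nonneg_right this (sub_nonneg.2 (pow_le_one₀ hy₀ hy₁))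

lemma summable_pow_div_pow_sq {t : ℝ} (ht : 1 < t) (x : ℝ) :
    Summable fun k : ℕ => x ^ k / t ^ (k ^ 2) := by
  refine Summable.of_norm_bounded_eventually summable_geometric_two ?_
  have hlarge : ∀ᶠ k : ℕ in Filter.atTop, 2 * |x| ≤ t ^ k :=
    (tendsto_pow_atTop_atTop_of_one_lt ht).eventually_ge_atTop _
  rw [Nat.cofinite_eq_atTop]
  filter_upwards [hlarge] with k hk
  have htk : 0 < t ^ k := pow_pos (zero_lt_one.trans ht) k
  rw [norm_div, norm_pow, norm_pow, Real.norm_eq_abs, Real.norm_eq_abs,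
    abs_of_pos (zero_lt_one.trans ht), sq, pow_mul, ← div_pow]
  refine pow_le_pow_left₀ (by positivity) ?_ k
  rw [div_le_iff₀ htk]
  linarith

lemma neg_sqrt_mul_pow_div_sqrt_pow_sq {a : ℝ} (ha : 0 < a) (z : ℝ) (k : ℕ) :
    (-(√a * z)) ^ k / √a ^ (k ^ 2) = (-1) ^ k * coeffAB a a k * z ^ k := by
  have h := coeffAB_self_mul_pow_sq (Real.sqrt_pos.2 ha).ne' k
  rw [Real.sq_sqrt ha.le] at h
  rw [div_eq_iff (pow_pos (Real.sqrt_pos.2 ha) _).ne', neg_pow, mul_pow, ← h]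
  ring

lemma partialThetaReal_sqrt_neg_mul_eq_phiAB {a : ℝ} (ha : 0 < a) (z : ℝ) :
    partialThetaReal √a (-(√a * z)) = phiAB a a z :=
  tsum_congr (neg_sqrt_mul_pow_div_sqrt_pow_sq ha z)

lemma summable_phiAB_self {a : ℝ} (ha : 1 < a) (z : ℝ) :
    Summable fun k : ℕ => (-1) ^ k * coeffAB a a k * z ^ k :=
  (summable_pow_div_pow_sq (Real.lt_sqrt zero_le_one |>.2 (by simpa using ha)) _).congr
    (neg_sqrt_mul_pow_div_sqrt_pow_sq (zero_lt_one.trans ha) z)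

lemma summable_phiAB {a b : ℝ} (ha : 1 < a) (hab : a ≤ b) (z : ℝ) :
    Summable fun k : ℕ => (-1) ^ k * coeffAB a b k * z ^ k := by
  have ha₀ := zero_lt_one.trans ha
  refine (summable_phiAB_self ha z).norm.of_norm_bounded fun k => ?_
  simp only [norm_mul, norm_pow, norm_neg, norm_one, one_pow, one_mul, Real.norm_eq_abs,
    abs_of_pos (coeffAB_pos ha₀ (ha₀.trans_le hab) k), abs_of_pos (coeffAB_pos ha₀ ha₀ k)]
  gcongr
  exact coeffAB_le_coeffAB_self ha₀ hab k

lemma tsum_nonneg_of_add_nonneg_pairs {f : ℕ → ℝ} (hf : Summable f) (h₀ : 0 ≤ f 0)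
    (h : ∀ m, 0 ≤ f (2 * m + 1) + f (2 * m + 2)) : 0 ≤ ∑' k, f k := by
  have hodd : Summable fun m => f (2 * m + 1) :=
    hf.comp_injective fun i j hij => by omega
  have heven : Summable fun m => f (2 * m + 2) :=
    hf.comp_injective fun i j hij => by omega
  rw [hf.tsum_eq_zero_add, ← tsum_even_add_odd (f := fun k => f (k + 1)) hodd heven,
    ← hodd.tsum_add heven]
  exact add_nonneg h₀ (tsum_nonneg h)

lemma phiAB_self_le_phiAB {a b z : ℝ} (ha : √2 ≤ a) (hab : a ≤ b) (hz : 0 ≤ z)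
    (hza : z ≤ a) :
    phiAB a a z ≤ phiAB a b z := by
  have ha₁ : 1 < a := Real.one_lt_sqrt_two.trans_le ha
  have hsa := summable_phiAB_self ha₁ z
  have hsb := summable_phiAB ha₁ hab z
  rw [phiAB, phiAB, ← sub_nonneg, ← hsb.tsum_sub hsa]
  refine tsum_nonneg_of_add_nonneg_pairs (hsb.sub hsa) (by simp [coeffAB]) fun m => ?_
  have hd := sub_nonneg.2 (coeffAB_le_coeffAB_self (zero_lt_one.trans ha₁) hab (2 * m + 2))
  have hdz : (coeffAB a a (2 * m + 2) - coeffAB a b (2 * m + 2)) * z ≤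
      coeffAB a a (2 * m + 1) - coeffAB a b (2 * m + 1) := by
    rw [mul_comm]
    exact (mul_le_mul_of_nonneg_right hza hd).trans
      (mul_sub_coeffAB_two_mul_add_two_le ha hab m)
  rw [(odd_two_mul_add_one m).neg_one_pow,
    (show Even (2 * m + 2) from ⟨m + 1, by ring⟩).neg_one_pow]
  linear_combination mul_nonneg (pow_nonneg hz (2 * m + 1)) (sub_nonneg.2 hdz)

/-- For `3 ≤ a < b`, if `φ_{a,b}(z₀) ≤ 0` for some `z₀ ∈ (1, a]`,
then `g_{√a}(−√a·z₀) ≤ 0`; in particular `y₀ = −√a·z₀` satisfies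
`√a < |y₀| ≤ (√a)³` and `g_{√a}(y₀) ≤ 0`. -/
theorem partialTheta_nonpos_of_phiAB (a b : ℝ) (ha : 3 ≤ a) (hab : a < b) (z₀ : ℝ)
    (hz₀ : z₀ ∈ Set.Ioc (1 : ℝ) a) (h : phiAB a b z₀ ≤ 0) :
    partialThetaReal (Real.sqrt a) (-(Real.sqrt a * z₀)) ≤ 0 ∧
      Real.sqrt a < |(-(Real.sqrt a * z₀))| ∧
      |(-(Real.sqrt a * z₀))| ≤ (Real.sqrt a) ^ 3 := by
  obtain ⟨hz₁, hza⟩ := hz₀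
  have ha₀ : 0 < a := by linarith
  have hsqrt2 : √2 ≤ a := Real.sqrt_le_iff.2 ⟨ha₀.le, by nlinarith⟩
  have ht : 0 < √a := Real.sqrt_pos.2 ha₀
  have habs : |-(√a * z₀)| = √a * z₀ := by
    rw [abs_neg, abs_of_pos (mul_pos ht (by linarith))]
  refine ⟨?_, ?_, ?_⟩
  · rw [partialThetaReal_sqrt_neg_mul_eq_phiAB ha₀]
    exact (phiAB_self_le_phiAB hsqrt2 hab.le (by linarith) hza).trans h
  · rw [habs]
    exact lt_mul_of_one_lt_right ht hz₁
  · rw [habs, pow_succ', sq, Real.mul_self_sqrt ha₀.le]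
    exact mul_le_mul_of_nonneg_left hza ht.le
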